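/- arXiv:2010.08515 — 3 statements merged into one kernel-verified Lean document; each statement's English description precedes it below -/
import Mathlib

section
/- The hypothesis class H = { x ↦ sign(x_{1:d}ᵀ U x_{d+1:2d}) : U ∈ O(d) } on ℝ^{2d} has VC dimension at least d(d−1)/2. -/
open NormedSpace Filter Topology Finset

/-!
For a skew-symmetric `A`, `exp (t • A)` is orthogonal and equals `1 + t • A + O(t²)`. Putting an
arbitrary sign `σᵢⱼ` into the entry `Aᵢⱼ` for each `i < j`, every such off-diagonal entry of
`exp (t • A)` vanishes at `t = 0` with derivative `σᵢⱼ`, so for small `t > 0` it has sign `σᵢⱼ`.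
Evaluated at `x = e_i + e_{d+j}`, the bilinear form `x_{1:d}ᵀ U x_{d+1:2d}` is the entry `Uᵢⱼ`,
so these `d(d-1)/2` points are shattered.
-/

namespace Matrix

section SkewOfUpper

variable {ι : Type*} [LinearOrder ι]

def skewOfUpper (s : ι → ι → ℝ) : Matrix ι ι ℝ :=
  Matrix.of fun i j => if i < j then s i j else if j < i then -s j i else 0

theorem skewOfUpper_apply_of_lt (s : ι → ι → ℝ) {i j : ι} (h : i < j) :
    skewOfUpper s i j = s i j := by
  simp [skewOfUpper, h]

theorem transpose_skewOfUpper (s : ι → ι → ℝ) : (skewOfUpper s)ᵀ = -skewOfUpper s := by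
  ext i j
  rcases lt_trichotomy i j with h | rfl | h
  · simp [skewOfUpper, h, h.asymm]
  · simp [skewOfUpper]
  · simp [skewOfUpper, h, h.asymm]

end SkewOfUpper

variable {n : Type*} [Fintype n] [DecidableEq n]

theorem exp_mem_orthogonalGroup_of_transpose_eq_neg {A : Matrix n n ℝ} (hA : Aᵀ = -A) :
    exp A ∈ orthogonalGroup n ℝ := by
  rw [mem_orthogonalGroup_iff, ← exp_transpose, hA,
    ← exp_add_of_commute _ _ (Commute.refl A).neg_right, add_neg_cancel, exp_zero]

section Derivative

attribute [local instance] Matrix.linftyOpNormedRing Matrix.linftyOpNormedAlgebra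

theorem hasDerivAt_exp_smul_apply_zero (A : Matrix n n ℝ) (i j : n) :
    HasDerivAt (fun t : ℝ => exp (t • A) i j) (A i j) 0 := by
  have hexp := hasDerivAt_exp_smul_const (𝕂 := ℝ) A 0
  rw [zero_smul, exp_zero, one_mul] at hexp
  exact (entryLinearMap ℝ ℝ i j).toContinuousLinearMap.hasFDerivAt.comp_hasDerivAt 0 hexp

end Derivative

end Matrix

theorem Real.sign_eq_sign_of_mul_pos {a b : ℝ} (h : 0 < a * b) : Real.sign a = Real.sign b := by
  rcases mul_pos_iff.mp h with ⟨ha, hb⟩ | ⟨ha, hb⟩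
  · rw [Real.sign_of_pos ha, Real.sign_of_pos hb]
  · rw [Real.sign_of_neg ha, Real.sign_of_neg hb]

theorem HasDerivWithinAt.eventually_sign_eq {f : ℝ → ℝ} {c x : ℝ}
    (hf : HasDerivWithinAt f c (Set.Ioi x) x) (hfx : f x = 0) (hc : c ≠ 0) :
    ∀ᶠ t in 𝓝[>] x, Real.sign (f t) = Real.sign c := by
  have hslope : Tendsto (fun t => slope f x t * c) (𝓝[>] x) (𝓝 (c * c)) :=
    ((hasDerivWithinAt_iff_tendsto_slope' (lt_irrefl x)).1 hf).mul_const c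
  filter_upwards [hslope.eventually_const_lt (mul_self_pos.mpr hc), self_mem_nhdsWithin]
    with t hpos (ht : x < t)
  apply Real.sign_eq_sign_of_mul_pos
  rw [slope_def_field, hfx, sub_zero] at hpos
  have : f t * c = (f t / (t - x) * c) * (t - x) := by field_simp [(sub_pos.2 ht).ne']
  rw [this]
  exact mul_pos hpos (sub_pos.2 ht)

section BasisPair

variable {ι : Type*} [DecidableEq ι]

noncomputable def basisPair (i j : ι) : ι ⊕ ι → ℝ :=
  Sum.elim (Pi.single i 1) (Pi.single j 1)

theorem basisPair_injective : Function.Injective fun p : ι × ι => basisPair p.1 p.2 := by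
  rintro ⟨i, j⟩ ⟨i', j'⟩ h
  have hl := congrFun h (Sum.inl i)
  have hr := congrFun h (Sum.inr j)
  simp only [basisPair, Sum.elim_inl, Sum.elim_inr, Pi.single_apply] at hl hr
  grind

theorem sum_basisPair_mul_mul [Fintype ι] (U : Matrix ι ι ℝ) (i j : ι) :
    ∑ a, ∑ b, basisPair i j (Sum.inl a) * U a b * basisPair i j (Sum.inr b) = U i j := by
  simp [basisPair, Pi.single_apply, ite_mul, mul_ite]

end BasisPair

open Matrix in
/-- The hypothesis class `{ x ↦ sign(x_{1:d}ᵀ U x_{d+1:2d}) : U ∈ O(d) }` on `ℝ^{2d}`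
has VC dimension at least `d(d−1)/2`: there is a set of `d(d−1)/2` points which it
shatters. -/
theorem stmt_8 (d : ℕ) :
    ∃ S : Finset (Fin d ⊕ Fin d → ℝ), S.card = d * (d - 1) / 2 ∧
      ∀ σ : (Fin d ⊕ Fin d → ℝ) → ℝ, (∀ x ∈ S, σ x = 1 ∨ σ x = -1) →
        ∃ U ∈ Matrix.orthogonalGroup (Fin d) ℝ,
          ∀ x ∈ S, Real.sign (∑ i, ∑ j, x (Sum.inl i) * U i j * x (Sum.inr j)) = σ x := by
  set P : Finset (Fin d × Fin d) := {p ∈ univ ×ˢ univ | p.1 < p.2}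
  refine ⟨P.image fun p => basisPair p.1 p.2, ?_, fun σ hσ => ?_⟩
  · rw [card_image_of_injective _ basisPair_injective, card_product_filter_lt, card_univ,
      Fintype.card_fin, Nat.choose_two_right]
  set A := skewOfUpper fun i j => σ (basisPair i j)
  have hsign : ∀ᶠ t in 𝓝[>] (0 : ℝ), ∀ p ∈ P,
      Real.sign (exp (t • A) p.1 p.2) = σ (basisPair p.1 p.2) := by
    refine (eventually_all_finset P).2 fun p hp => ?_
    have hlt : p.1 < p.2 := (mem_filter.1 hp).2
    have hA : A p.1 p.2 = σ (basisPair p.1 p.2) := skewOfUpper_apply_of_lt _ hlt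
    rcases hσ _ (mem_image_of_mem _ hp) with h | h <;>
      simpa [hA, h, Real.sign_neg] using
        (hasDerivAt_exp_smul_apply_zero A p.1 p.2).hasDerivWithinAt.eventually_sign_eq
          (by simp [one_apply_ne hlt.ne]) (by simp [hA, h])
  obtain ⟨t, ht⟩ := hsign.exists
  refine ⟨exp (t • A), exp_mem_orthogonalGroup_of_transpose_eq_neg ?_, ?_⟩
  · rw [transpose_smul, transpose_skewOfUpper, smul_neg]
  · rintro _ hx
    obtain ⟨p, hp, rfl⟩ := mem_image.1 hx
    rw [sum_basisPair_mul_mul, ht p hp]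
end

section
/- For skew-symmetric matrices, the matrix exponential is Lipschitz near zero: for any A, B skew-symmetric d×d matrices with spectral norms ‖A‖ ≤ π/4 and ‖B‖ ≤ π/4, ‖exp(A) − exp(B)‖_F ≤ ‖A − B‖_F. -/
/-!
The path `t ↦ exp (t • A) * exp ((1 - t) • B)` runs from `exp B` to `exp A` with derivative
`exp (t • A) * (A - B) * exp ((1 - t) • B)`. For skew-adjoint `A`, `B` the outer factors are
unitary, and the Frobenius norm is invariant under multiplication by unitaries on either side,
so the derivative has norm `‖A - B‖` throughout and the mean value inequality concludes.
-/

open Matrix NormedSpace Set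

section BanachAlgebra

variable {𝔸 : Type*} [NormedRing 𝔸] [NormedAlgebra ℝ 𝔸] [CompleteSpace 𝔸]

theorem hasDerivAt_exp_smul_mul_exp_one_sub_smul (A B : 𝔸) (t : ℝ) :
    HasDerivAt (fun s : ℝ => exp (s • A) * exp ((1 - s) • B))
      (exp (t • A) * (A - B) * exp ((1 - t) • B)) t := by
  have hB : HasDerivAt (fun s : ℝ => exp ((1 - s) • B)) (-(B * exp ((1 - t) • B))) t := by
    have h := (hasDerivAt_exp_smul_const' B (1 - t)).scomp t ((hasDerivAt_id t).const_sub 1)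
    rwa [neg_one_smul] at h
  refine ((hasDerivAt_exp_smul_const A t).mul hB).congr_deriv ?_
  rw [mul_sub, sub_mul, mul_assoc, mul_assoc, mul_neg, ← sub_eq_add_neg]

theorem norm_exp_sub_exp_le_of_forall_norm_le {A B : 𝔸} {C : ℝ}
    (h : ∀ t ∈ Icc (0 : ℝ) 1, ‖exp (t • A) * (A - B) * exp ((1 - t) • B)‖ ≤ C) :
    ‖exp A - exp B‖ ≤ C := by
  simpa using (convex_Icc (0 : ℝ) 1).norm_image_sub_le_of_norm_hasDerivWithin_le
    (fun t _ => (hasDerivAt_exp_smul_mul_exp_one_sub_smul A B t).hasDerivWithinAt) h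
    (left_mem_Icc.2 zero_le_one) (right_mem_Icc.2 zero_le_one)

end BanachAlgebra

namespace Matrix

open scoped Norms.Frobenius

variable {m n 𝕜 : Type*} [Fintype m] [Fintype n]

theorem frobenius_norm_eq_sqrt {α : Type*} [SeminormedAddCommGroup α] (X : Matrix m n α) :
    ‖X‖ = √(∑ i, ∑ j, ‖X i j‖ ^ 2) := by
  simp [frobenius_norm_def, Real.sqrt_eq_rpow]

variable [RCLike 𝕜]

theorem frobenius_norm_sq_eq_re_trace (X : Matrix m n 𝕜) :
    ‖X‖ ^ 2 = RCLike.re (Xᴴ * X).trace := by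
  rw [frobenius_norm_eq_sqrt, Real.sq_sqrt (by positivity), Finset.sum_comm]
  simp [trace, mul_apply, RCLike.conj_mul]

theorem frobenius_norm_unitary_mul [DecidableEq m] {U : Matrix m m 𝕜}
    (hU : U ∈ unitary (Matrix m m 𝕜)) (X : Matrix m n 𝕜) : ‖U * X‖ = ‖X‖ := by
  rw [← sq_eq_sq₀ (norm_nonneg _) (norm_nonneg _), frobenius_norm_sq_eq_re_trace,
    frobenius_norm_sq_eq_re_trace, conjTranspose_mul, Matrix.mul_assoc, ← Matrix.mul_assoc Uᴴ,
    ← star_eq_conjTranspose, Unitary.star_mul_self_of_mem hU, Matrix.one_mul]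

theorem frobenius_norm_mul_unitary [DecidableEq n] (X : Matrix m n 𝕜) {U : Matrix n n 𝕜}
    (hU : U ∈ unitary (Matrix n n 𝕜)) : ‖X * U‖ = ‖X‖ := by
  rw [← frobenius_norm_conjTranspose, conjTranspose_mul, ← star_eq_conjTranspose U,
    frobenius_norm_unitary_mul (Unitary.star_mem hU), frobenius_norm_conjTranspose]

theorem frobenius_norm_exp_sub_exp_le [DecidableEq n] {A B : Matrix n n 𝕜}
    (hA : A ∈ skewAdjoint (Matrix n n 𝕜)) (hB : B ∈ skewAdjoint (Matrix n n 𝕜)) :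
    ‖exp A - exp B‖ ≤ ‖A - B‖ := by
  refine norm_exp_sub_exp_le_of_forall_norm_le fun t _ => le_of_eq ?_
  rw [frobenius_norm_mul_unitary _ (exp_mem_unitary_of_mem_skewAdjoint
      (skewAdjoint.smul_mem (1 - t) hB)), frobenius_norm_unitary_mul
      (exp_mem_unitary_of_mem_skewAdjoint (skewAdjoint.smul_mem t hA))]

end Matrix

theorem stmt_10_general (d : ℕ) (A B : Matrix (Fin d) (Fin d) ℝ)
    (hA : Aᵀ = -A) (hB : Bᵀ = -B) :
    Real.sqrt (∑ i, ∑ j, (NormedSpace.exp A i j - NormedSpace.exp B i j) ^ 2)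
      ≤ Real.sqrt (∑ i, ∑ j, (A i j - B i j) ^ 2) := by
  open scoped Matrix.Norms.Frobenius in
  have h := Matrix.frobenius_norm_exp_sub_exp_le (A := A) (B := B)
    (by rwa [skewAdjoint.mem_iff, star_eq_conjTranspose, conjTranspose_eq_transpose_of_trivial])
    (by rwa [skewAdjoint.mem_iff, star_eq_conjTranspose, conjTranspose_eq_transpose_of_trivial])
  simpa [Matrix.frobenius_norm_eq_sqrt, sq_abs] using h

/-- For skew-symmetric `A, B` with spectral norm at most `π/4`,
`‖exp(A) − exp(B)‖_F ≤ ‖A − B‖_F`. -/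
theorem stmt_10 (d : ℕ) (A B : Matrix (Fin d) (Fin d) ℝ)
    (hA : Aᵀ = -A) (hB : Bᵀ = -B)
    (hAn : ‖Matrix.toEuclideanCLM (𝕜 := ℝ) A‖ ≤ Real.pi / 4)
    (hBn : ‖Matrix.toEuclideanCLM (𝕜 := ℝ) B‖ ≤ Real.pi / 4) :
    Real.sqrt (∑ i, ∑ j, (NormedSpace.exp A i j - NormedSpace.exp B i j) ^ 2)
      ≤ Real.sqrt (∑ i, ∑ j, (A i j - B i j) ^ 2) :=
  stmt_10_general d A B hA hB
end

section
/- For any distribution class P that can be written as P_X ⋄ H (input distributions P_X labeled by hypotheses in H) with P_X invariant under a group G of transformations of the input space (i.e., P_X ∘ G = P_X), the infimum over G-equivariant algorithms of the ε-expected sample complexity for P_X ⋄ H is at least the infimum over all algorithms of the ε-expected sample complexity for P_X ⋄ (H ∘ G). -/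
open MeasureTheory

namespace Stmt19

variable {X : Type*} [MeasurableSpace X]

/-- The error of hypothesis `h` on the task with input distribution `P` and target
labeling function `target`. -/
noncomputable def err (P : Measure X) (target h : X → ℝ) : ℝ :=
  (P {x | h x ≠ target x}).toReal

/-- A (deterministic) learning algorithm: for each sample size `n`, a map from labeled
samples to a hypothesis. -/
def Alg (X : Type*) := ∀ n : ℕ, (Fin n → X × ℝ) → (X → ℝ)

/-- The expected error of algorithm `A` with `n` i.i.d. samples from the task
`(P, target)`. -/
noncomputable def expErr (A : Alg X) (n : ℕ) (P : Measure X) (target : X → ℝ) : ℝ :=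
  ∫ x : Fin n → X,
    err P target (A n fun i => (x i, target (x i))) ∂(Measure.pi fun _ => P)

/-- The `ε`-expected sample complexity of `A` on the set of tasks `T` (each task being a
pair of an input distribution and a target function). -/
noncomputable def sampleComplexity (A : Alg X) (T : Set (Measure X × (X → ℝ)))
    (ε : ℝ) : ℕ∞ :=
  sInf {N : ℕ∞ | ∃ n : ℕ, N = n ∧ ∀ t ∈ T, expErr A n t.1 t.2 ≤ ε}

/-- `A` is equivariant under a group `G` of permutations of the input space. -/
def Equivariant (G : Subgroup (Equiv.Perm X)) (A : Alg X) : Prop :=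
  ∀ g ∈ G, ∀ (n : ℕ) (s : Fin n → X × ℝ) (x : X),
    A n (fun i => (g (s i).1, (s i).2)) (g x) = A n s x

/-- If the class of input distributions `PX` is invariant under a group `G` of
(measurable) transformations of the input space, then the infimum over `G`-equivariant
algorithms of the `ε`-expected sample complexity for `PX ⋄ H` is at least the infimum
over all algorithms of the `ε`-expected sample complexity for `PX ⋄ (H ∘ G)`. -/
theorem stmt_19 (PX : Set (Measure X)) (H : Set (X → ℝ)) (G : Subgroup (Equiv.Perm X))
    (hprob : ∀ P ∈ PX, IsProbabilityMeasure P)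
    (hmeas : ∀ g ∈ G, Measurable (g : X → X))
    (hinv : ∀ g ∈ G, ∀ P ∈ PX, Measure.map (g : X → X) P ∈ PX) (ε : ℝ) :
    (⨅ A : Alg X, sampleComplexity A
        (PX ×ˢ Set.image2 (fun (h : X → ℝ) (g : Equiv.Perm X) => h ∘ (g : X → X))
          H (G : Set (Equiv.Perm X))) ε)
      ≤ ⨅ A : {A : Alg X // Equivariant G A},
          sampleComplexity A.1 (PX ×ˢ H) ε := by
  refine le_iInf fun A => ?_
  refine le_trans (iInf_le _ A.1) ?_
  obtain ⟨A, hA⟩ := A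
  apply sInf_le_sInf
  rintro N ⟨n, rfl, hn⟩
  refine ⟨n, rfl, ?_⟩
  rintro ⟨P, f⟩ ⟨hP, h, hh, g, hg, rfl⟩
  -- key: expErr A n P (h ∘ g) = expErr A n (map g P) h
  have hg' : (g⁻¹ : Equiv.Perm X) ∈ G := inv_mem hg
  set e : X ≃ᵐ X := ⟨g, hmeas g hg, hmeas _ hg'⟩ with he
  have hprobP : IsProbabilityMeasure P := hprob P hP
  have hP' : Measure.map (g : X → X) P ∈ PX := hinv g hg P hP
  have hprobP' : IsProbabilityMeasure (Measure.map (g : X → X) P) :=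
    Measure.isProbabilityMeasure_map (hmeas g hg).aemeasurable
  have hmp : MeasurePreserving (e : X → X) P (Measure.map (g : X → X) P) :=
    ⟨hmeas g hg, rfl⟩
  have hpi : MeasurePreserving (fun (x : Fin n → X) i => e (x i))
      (Measure.pi fun _ => P) (Measure.pi fun _ => Measure.map (g : X → X) P) :=
    MeasureTheory.measurePreserving_pi _ _ fun _ => hmp
  have hemb : MeasurableEmbedding (fun (x : Fin n → X) i => e (x i)) :=
    (MeasurableEquiv.piCongrRight fun _ : Fin n => e).measurableEmbedding
  have key : expErr A n P (h ∘ (g : X → X)) = expErr A n (Measure.map (g : X → X) P) h := by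
    unfold expErr
    rw [← hpi.integral_comp hemb]
    refine integral_congr_ae (Filter.Eventually.of_forall fun x => ?_)
    have heq : ∀ z : X,
        A n (fun i => ((g (x i) : X), h (g (x i)))) (g z)
          = A n (fun i => (x i, h (g (x i)))) z := by
      intro z
      exact hA g hg n (fun i => (x i, h (g (x i)))) z
    unfold err
    have hmapset : ∀ S : Set X, Measure.map (g : X → X) P S = P ((g : X → X) ⁻¹' S) := by
      intro S
      exact e.measurableEmbedding.map_apply P S
    simp only [hmapset]
    congr 2
    ext z
    simp only [Set.mem_preimage, Set.mem_setOf_eq]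
    constructor
    · intro hz
      have hec : ((e : X → X)) = g := rfl
      simpa [hec, heq] using hz
    · intro hz
      have hec : ((e : X → X)) = g := rfl
      simpa [hec, heq] using hz
  rw [key]
  exact hn (Measure.map (g : X → X) P, h) ⟨hP', hh⟩

end Stmt19
end
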